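/- (Corollary 3.3) For every i = 1, …, l and all characters ν, ν′ : Q → ℂ^×, the composition σ_{ω_i,ν} ∘ τ_{λ_i,ν′} maps I_{λ_0} into itself: σ_{ω_i,ν}(τ_{λ_i,ν′}(I_{λ_0})) ⊆ I_{λ_0}. -/

import Mathlib

/-- The data of a finite-dimensional complex simple Lie algebra `𝔤` of type `A`, `D` or `E`
of rank `l`, recorded through: its Cartan matrix `M`; its set `Δ` of positive roots, each
written via its coordinates in the basis of simple roots (so the `i`-th simple root is
`Pi.single i 1`); and the affinization `𝔫̄ = 𝔫 ⊗ ℂ[t,t⁻¹]` of the nilpotent subalgebra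
`𝔫 = ⊕_{α ∈ Δ} ℂx_α`, where `x α m` stands for `x_α ⊗ t^m`.  The weight lattice `P` is
identified with `ℤ^l` via `λ ↦ (⟨λ, α_j⟩)_j`, so that `⟨λ, α⟩ = ∑_j ⟨λ, α_j⟩ α^j` for a
positive root `α` with simple-root coordinates `α^j`; in particular `⟨λ_i, α⟩ = α^i` and
`⟨α_i, α⟩ = ∑_j m_{ij} α^j`. -/
structure ADEContext where
  /-- the rank -/
  l : ℕ
  hl : 0 < l
  /-- the Cartan matrix -/
  M : Matrix (Fin l) (Fin l) ℤ
  M_symm : M.IsSymm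
  M_diag : ∀ i, M i i = 2
  M_offdiag : ∀ i j, i ≠ j → M i j = 0 ∨ M i j = -1
  M_posdef : (M.map ((↑) : ℤ → ℝ)).PosDef
  /-- the set of positive roots, in simple-root coordinates -/
  Δ : Finset (Fin l → ℤ)
  Δ_nonneg : ∀ α ∈ Δ, ∀ j, 0 ≤ α j
  Δ_ne_zero : ∀ α ∈ Δ, α ≠ 0
  simple_mem : ∀ i : Fin l, (Pi.single i 1 : Fin l → ℤ) ∈ Δ
  /-- every nonsimple positive root is a positive root plus a simple root -/
  Δ_decomp : ∀ α ∈ Δ, (∀ i : Fin l, α ≠ Pi.single i 1) →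
    ∃ β ∈ Δ, ∃ i : Fin l, α = β + Pi.single i 1
  /-- `α_i + α_j` is a root iff `i ≠ j` and `m_{ij} = -1` (simply-laced types) -/
  sum_simple_mem_iff : ∀ i j : Fin l,
    ((Pi.single i 1 + Pi.single j 1 : Fin l → ℤ) ∈ Δ) ↔ (i ≠ j ∧ M i j = -1)
  /-- `2α_i + α_j` is never a root (simply-laced types) -/
  two_simple_add_not_mem : ∀ i j : Fin l,
    ((2 : ℤ) • (Pi.single i 1 : Fin l → ℤ) + Pi.single j 1) ∉ Δ
  /-- the underlying type of the affinization `𝔫̄ = 𝔫 ⊗ ℂ[t,t⁻¹]` -/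
  nbar : Type
  [instLieRing : LieRing nbar]
  [instLieAlgebra : LieAlgebra ℂ nbar]
  /-- `x α m` is the element `x_α ⊗ t^m` of `𝔫̄` -/
  x : (Fin l → ℤ) → ℤ → nbar
  /-- the elements `x_α ⊗ t^m`, `α ∈ Δ`, `m ∈ ℤ`, form a `ℂ`-basis of `𝔫̄` -/
  basis : Module.Basis ({α // α ∈ Δ} × ℤ) ℂ nbar
  basis_eq : ∀ (α : {α // α ∈ Δ}) (m : ℤ), basis (α, m) = x α.1 m
  /-- the structure constants: `[x_α, x_β] = C_{α,β} x_{α+β}` -/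
  C : (Fin l → ℤ) → (Fin l → ℤ) → ℂ
  C_ne_zero : ∀ α ∈ Δ, ∀ β ∈ Δ, α + β ∈ Δ → C α β ≠ 0
  /-- the bracket `[x ⊗ t^m, y ⊗ t^n] = [x,y] ⊗ t^{m+n}` on `𝔫̄` -/
  bracket_x : ∀ α ∈ Δ, ∀ β ∈ Δ, ∀ m n : ℤ,
    ⁅x α m, x β n⁆ = if α + β ∈ Δ then C α β • x (α + β) (m + n) else 0

attribute [instance] ADEContext.instLieRing ADEContext.instLieAlgebra

namespace ADEContext

variable (ctx : ADEContext)

/-- the universal enveloping algebra `U(𝔫̄)` -/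
abbrev U : Type := UniversalEnvelopingAlgebra ℂ ctx.nbar

/-- the element `x_α(m) = x_α ⊗ t^m`, viewed in `U(𝔫̄)` -/
noncomputable def X (α : Fin ctx.l → ℤ) (m : ℤ) : ctx.U :=
  UniversalEnvelopingAlgebra.ι ℂ (ctx.x α m)

/-- the `i`-th simple root `α_i`, in simple-root coordinates -/
def sroot (i : Fin ctx.l) : Fin ctx.l → ℤ := Pi.single i 1

/-- the left ideal `U(𝔫̄)𝔫̄₊` of `U(𝔫̄)` generated by `𝔫̄₊ = 𝔫 ⊗ ℂ[t]` (equivalently, by the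
elements `x_α(m)`, `α ∈ Δ`, `m ≥ 0`, which span `𝔫̄₊`) -/
noncomputable def Uplus : Submodule ctx.U ctx.U :=
  Submodule.span ctx.U {u | ∃ α ∈ ctx.Δ, ∃ m : ℤ, 0 ≤ m ∧ u = ctx.X α m}

/-- the truncated relation `R^j_{-1,t} = ∑_{m₁,m₂ ≤ -1, m₁+m₂=-t} x_{α_j}(m₁)x_{α_j}(m₂)` -/
noncomputable def R (j : Fin ctx.l) (t : ℤ) : ctx.U :=
  ∑ m ∈ Finset.Icc (1 - t) (-1 : ℤ), ctx.X (ctx.sroot j) m * ctx.X (ctx.sroot j) (-t - m)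

/-- the left ideal `J` of `U(𝔫̄)` generated by the `R^j_{-1,t}`, `j = 1, …, l`, `t ≥ 2` -/
noncomputable def Jideal : Submodule ctx.U ctx.U :=
  Submodule.span ctx.U {u | ∃ j : Fin ctx.l, ∃ t : ℤ, 2 ≤ t ∧ u = ctx.R j t}

/-- the left ideal `I_{λ_0} = J + U(𝔫̄)𝔫̄₊` -/
noncomputable def I0 : Submodule ctx.U ctx.U := ctx.Jideal ⊔ ctx.Uplus

/-- the left ideal `I_{λ_i} = I_{λ_0} + U(𝔫̄)x_{α_i}(-1)`, `i = 1, …, l` -/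
noncomputable def Ii (i : Fin ctx.l) : Submodule ctx.U ctx.U :=
  ctx.I0 ⊔ Submodule.span ctx.U {ctx.X (ctx.sroot i) (-1)}

/-- the value `ν(α) = ∏_j ν_j^{α^j}` on `α ∈ Q` of the character `ν : Q → ℂ^×` determined by
`ν(α_j) = ν_j = νu j` -/
def charVal (νu : Fin ctx.l → ℂˣ) (α : Fin ctx.l → ℤ) : ℂ :=
  (∏ j, (νu j) ^ (α j) : ℂˣ)

end ADEContext

/-!
Write `φ = τ ∘ τ'`, so that `φ (x_α(m)) = c_α x_α(m - ⟨α_i, α⟩)`. The elements `u` with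
`φ(u) x_{α_i}(-1) ∈ I_{λ_0}` form a left ideal, so only the generators of `I_{λ_0}` need checking.

For `x_α(m)` with `m ≥ 0`, induct on the height of `α`, writing `x_{β+α_j}` as a commutator of
`x_β` and `x_{α_j}`; this reduces everything to simple roots, where the only negative modes that
occur are killed by `x_{α_i}(-1)² = R^i_{-1,2}` and `2 x_{α_i}(-2) x_{α_i}(-1) = R^i_{-1,3}`.

For `R^j_{-1,t}`, `φ` shifts all modes by `-m_{ij}`. If `m_{ij} = 0` the image is `R^j_{-1,t}`,
which commutes with `x_{α_i}(-1)`. If `j = i` it is `R^i_{-1,t+4}` up to boundary terms that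
`x_{α_i}(-1)` kills. If `m_{ij} = -1`, its commutator with `x_{α_i}(-1)` is, modulo `U(𝔫̄)𝔫̄₊`,
a multiple of `[R^j_{-1,t-1}, x_{α_i}(0)]`.
-/

theorem Finset.sum_Icc_comp_add {M : Type*} [AddCommMonoid M] (f : ℤ → M) (a b k : ℤ) :
    ∑ n ∈ Finset.Icc a b, f (n + k) = ∑ n ∈ Finset.Icc (a + k) (b + k), f n := by
  rw [← Finset.map_add_right_Icc, Finset.sum_map]
  rfl

theorem Finset.sum_Icc_comp_reflect {M : Type*} [AddCommMonoid M] (f : ℤ → M) (a b : ℤ) :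
    ∑ n ∈ Finset.Icc a b, f (a + b - n) = ∑ n ∈ Finset.Icc a b, f n :=
  Finset.sum_nbij' (fun n ↦ a + b - n) (fun n ↦ a + b - n)
    (fun n hn ↦ by simp only [Finset.mem_Icc] at hn ⊢; omega)
    (fun n hn ↦ by simp only [Finset.mem_Icc] at hn ⊢; omega)
    (fun n _ ↦ sub_sub_cancel _ _) (fun n _ ↦ sub_sub_cancel _ _) (fun n _ ↦ rfl)

def Submodule.comapMulRight {A F : Type*} [Ring A] [FunLike F A A] [RingHomClass F A A]
    (I : Submodule A A) (f : F) (w : A) : Submodule A A where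
  carrier := {u | f u * w ∈ I}
  add_mem' {u v} hu hv := by
    simpa only [Set.mem_ofPred_eq, map_add, add_mul] using I.add_mem hu hv
  zero_mem' := by simp
  smul_mem' c u hu := by
    simpa only [Set.mem_ofPred_eq, smul_eq_mul, map_mul, mul_assoc] using
      Ideal.mul_mem_left I (f c) hu

@[simp]
theorem Submodule.mem_comapMulRight {A F : Type*} [Ring A] [FunLike F A A] [RingHomClass F A A]
    {I : Submodule A A} {f : F} {w u : A} : u ∈ I.comapMulRight f w ↔ f u * w ∈ I :=
  Iff.rfl

namespace ADEContext

open Matrix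

variable {ctx : ADEContext}

attribute [local instance] LieRing.ofAssociativeRing in
theorem X_mul_X_sub_X_mul_X {α β : Fin ctx.l → ℤ} (hα : α ∈ ctx.Δ) (hβ : β ∈ ctx.Δ) (m n : ℤ) :
    ctx.X α m * ctx.X β n - ctx.X β n * ctx.X α m
      = if α + β ∈ ctx.Δ then ctx.C α β • ctx.X (α + β) (m + n) else 0 := by
  have h := congrArg (UniversalEnvelopingAlgebra.ι ℂ) (ctx.bracket_x α hα β hβ m n)
  rw [LieHom.map_lie, Ring.lie_def] at h
  rw [X, X, h, apply_ite (UniversalEnvelopingAlgebra.ι ℂ), map_smul, map_zero]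
  rfl

theorem commute_X {α β : Fin ctx.l → ℤ} (hα : α ∈ ctx.Δ) (hβ : β ∈ ctx.Δ) (h : α + β ∉ ctx.Δ)
    (m n : ℤ) : Commute (ctx.X α m) (ctx.X β n) :=
  sub_eq_zero.1 <| (X_mul_X_sub_X_mul_X hα hβ m n).trans (if_neg h)

theorem X_add_eq_commutator {α β : Fin ctx.l → ℤ} (hα : α ∈ ctx.Δ) (hβ : β ∈ ctx.Δ)
    (h : α + β ∈ ctx.Δ) (m n : ℤ) : ctx.X (α + β) (m + n)
      = (ctx.C α β)⁻¹ • (ctx.X α m * ctx.X β n - ctx.X β n * ctx.X α m) := by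
  rw [X_mul_X_sub_X_mul_X hα hβ, if_pos h, smul_smul,
    inv_mul_cancel₀ (ctx.C_ne_zero α hα β hβ h), one_smul]

theorem sroot_mem (i : Fin ctx.l) : ctx.sroot i ∈ ctx.Δ := ctx.simple_mem i

theorem sroot_add_sroot_mem_iff (i j : Fin ctx.l) :
    ctx.sroot i + ctx.sroot j ∈ ctx.Δ ↔ ctx.M i j = -1 := by
  refine (ctx.sum_simple_mem_iff i j).trans ⟨And.right, fun h ↦ ⟨?_, h⟩⟩
  rintro rfl
  rw [ctx.M_diag] at h
  omega

theorem M_apply_symm (i j : Fin ctx.l) : ctx.M j i = ctx.M i j := ctx.M_symm.apply i j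

theorem mulVec_sroot (i j : Fin ctx.l) : (ctx.M *ᵥ ctx.sroot j) i = ctx.M i j := by
  rw [sroot, mulVec_single_one]
  rfl

theorem root_induction {P : (Fin ctx.l → ℤ) → Prop} (simple : ∀ i, P (ctx.sroot i))
    (step : ∀ β ∈ ctx.Δ, ∀ j, β + ctx.sroot j ∈ ctx.Δ → P β → P (β + ctx.sroot j)) :
    ∀ α ∈ ctx.Δ, P α := by
  intro α
  induction h : (∑ k, α k).toNat using Nat.strong_induction_on generalizing α with
  | _ n ih =>
    intro hα
    by_cases hs : ∃ i, α = ctx.sroot i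
    · obtain ⟨i, rfl⟩ := hs
      exact simple i
    · simp only [not_exists] at hs
      obtain ⟨β, hβ, j, rfl⟩ := ctx.Δ_decomp α hα hs
      have hheight : ∑ k, (β + Pi.single j 1 : Fin ctx.l → ℤ) k = ∑ k, β k + 1 := by
        simp [Finset.sum_add_distrib]
      have hβ_nonneg : 0 ≤ ∑ k, β k := Finset.sum_nonneg fun k _ ↦ ctx.Δ_nonneg β hβ k
      exact step β hβ j hα (ih _ (by omega) β rfl hβ)

theorem X_mul_X_of_add_mem {α β : Fin ctx.l → ℤ} (hα : α ∈ ctx.Δ) (hβ : β ∈ ctx.Δ)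
    (h : α + β ∈ ctx.Δ) (m n : ℤ) :
    ctx.X α m * ctx.X β n = ctx.X β n * ctx.X α m + ctx.C α β • ctx.X (α + β) (m + n) := by
  rw [← sub_eq_iff_eq_add', X_mul_X_sub_X_mul_X hα hβ, if_pos h]

theorem sroot_add_self_not_mem (i : Fin ctx.l) : ctx.sroot i + ctx.sroot i ∉ ctx.Δ := by
  rw [sroot_add_sroot_mem_iff, ctx.M_diag]
  omega

theorem commute_X_sroot (i : Fin ctx.l) (m n : ℤ) :
    Commute (ctx.X (ctx.sroot i) m) (ctx.X (ctx.sroot i) n) :=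
  commute_X (sroot_mem i) (sroot_mem i) (sroot_add_self_not_mem i) m n

theorem X_mem_I0 {α : Fin ctx.l → ℤ} (hα : α ∈ ctx.Δ) {m : ℤ} (hm : 0 ≤ m) :
    ctx.X α m ∈ ctx.I0 :=
  le_sup_right (a := ctx.Jideal) (Submodule.subset_span ⟨α, hα, m, hm, rfl⟩)

theorem R_mem_I0 (j : Fin ctx.l) (t : ℤ) : ctx.R j t ∈ ctx.I0 := by
  rcases le_or_gt 2 t with ht | ht
  · exact le_sup_left (b := ctx.Uplus) (Submodule.subset_span ⟨j, t, ht, rfl⟩)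
  · rw [R, Finset.Icc_eq_empty (by omega), Finset.sum_empty]
    exact zero_mem _

theorem X_neg_one_mul_X_neg_one_mem_I0 (i : Fin ctx.l) :
    ctx.X (ctx.sroot i) (-1) * ctx.X (ctx.sroot i) (-1) ∈ ctx.I0 := by
  simpa [R] using R_mem_I0 i 2

theorem X_neg_two_mul_X_neg_one_mem_I0 (i : Fin ctx.l) :
    ctx.X (ctx.sroot i) (-2) * ctx.X (ctx.sroot i) (-1) ∈ ctx.I0 := by
  have hR : ctx.R i 3 = (2 : ℂ) • (ctx.X (ctx.sroot i) (-2) * ctx.X (ctx.sroot i) (-1)) := by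
    rw [R, show Finset.Icc (1 - 3 : ℤ) (-1) = {-2, -1} by decide, Finset.sum_pair (by decide),
      two_smul, (commute_X_sroot i (-1) _).eq]
    norm_num
  have h := Submodule.smul_of_tower_mem _ (2⁻¹ : ℂ) (R_mem_I0 i 3)
  rwa [hR, smul_smul, inv_mul_cancel₀ two_ne_zero, one_smul] at h

theorem X_sroot_mul_X_neg_one_mem_I0 (i j : Fin ctx.l) {m : ℤ} (hm : -ctx.M i j ≤ m) :
    ctx.X (ctx.sroot j) m * ctx.X (ctx.sroot i) (-1) ∈ ctx.I0 := by
  by_cases hji : j = i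
  · subst hji
    rw [ctx.M_diag] at hm
    obtain rfl | rfl | hm := (by omega : m = -2 ∨ m = -1 ∨ 0 ≤ m)
    · exact X_neg_two_mul_X_neg_one_mem_I0 j
    · exact X_neg_one_mul_X_neg_one_mem_I0 j
    · rw [(commute_X_sroot j m (-1)).eq]
      exact Ideal.mul_mem_left _ _ (X_mem_I0 (sroot_mem j) hm)
  by_cases hδ : ctx.sroot j + ctx.sroot i ∈ ctx.Δ
  · have hM : ctx.M i j = -1 := by rwa [sroot_add_sroot_mem_iff, M_apply_symm] at hδ
    rw [X_mul_X_of_add_mem (sroot_mem j) (sroot_mem i) hδ]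
    exact add_mem (Ideal.mul_mem_left _ _ (X_mem_I0 (sroot_mem j) (by omega)))
      (Submodule.smul_of_tower_mem _ _ (X_mem_I0 hδ (by omega)))
  · have hM : ctx.M i j ≤ 0 := by rcases ctx.M_offdiag i j (Ne.symm hji) with h | h <;> omega
    rw [(commute_X (sroot_mem j) (sroot_mem i) hδ m (-1)).eq]
    exact Ideal.mul_mem_left _ _ (X_mem_I0 (sroot_mem j) (by omega))

theorem X_mul_X_neg_one_mem_I0 (i : Fin ctx.l) {β : Fin ctx.l → ℤ} (hβ : β ∈ ctx.Δ) {m : ℤ}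
    (hm : -(ctx.M *ᵥ β) i ≤ m) : ctx.X β m * ctx.X (ctx.sroot i) (-1) ∈ ctx.I0 := by
  refine root_induction
    (P := fun β ↦ ∀ m, -(ctx.M *ᵥ β) i ≤ m → ctx.X β m * ctx.X (ctx.sroot i) (-1) ∈ ctx.I0)
    (fun j m hm ↦ X_sroot_mul_X_neg_one_mem_I0 i j ?_) ?_ β hβ m hm
  · rwa [mulVec_sroot] at hm
  intro β hβ j hβj ih m hm
  rw [mulVec_add, Pi.add_apply, mulVec_sroot] at hm
  obtain ⟨b, rfl⟩ : ∃ b, m = -(ctx.M *ᵥ β) i + b := ⟨m + (ctx.M *ᵥ β) i, by ring⟩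
  rw [X_add_eq_commutator hβ (sroot_mem j) hβj, smul_mul_assoc, sub_mul, mul_assoc, mul_assoc]
  exact Submodule.smul_of_tower_mem _ _ <| sub_mem
    (Ideal.mul_mem_left _ _ (X_sroot_mul_X_neg_one_mem_I0 i j (by omega)))
    (Ideal.mul_mem_left _ _ (ih _ le_rfl))

variable (ctx) in
noncomputable def pairSum (α β : Fin ctx.l → ℤ) (s a b : ℤ) : ctx.U :=
  ∑ n ∈ Finset.Icc a b, ctx.X α n * ctx.X β (s - n)

theorem R_eq_pairSum (j : Fin ctx.l) (t : ℤ) :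
    ctx.R j t = ctx.pairSum (ctx.sroot j) (ctx.sroot j) (-t) (1 - t) (-1) :=
  rfl

theorem pairSum_eq_R (j : Fin ctx.l) {s a : ℤ} (ha : a = s + 1) :
    ctx.pairSum (ctx.sroot j) (ctx.sroot j) s a (-1) = ctx.R j (-s) := by
  rw [R_eq_pairSum, neg_neg, ha, add_comm, ← sub_neg_eq_add]

theorem map_pairSum {F : Type*} [FunLike F ctx.U ctx.U] [AlgHomClass F ℂ ctx.U ctx.U] (φ : F)
    {α : Fin ctx.l → ℤ} {c : ℂ} {d : ℤ} (hφ : ∀ m, φ (ctx.X α m) = c • ctx.X α (m - d))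
    (s a b : ℤ) :
    φ (ctx.pairSum α α s a b) = (c * c) • ctx.pairSum α α (s - 2 * d) (a - d) (b - d) := by
  simp only [pairSum, map_sum, map_mul, hφ, smul_mul_smul_comm, Finset.smul_sum]
  rw [sub_eq_add_neg a, sub_eq_add_neg b, ← Finset.sum_Icc_comp_add]
  refine Finset.sum_congr rfl fun n _ ↦ ?_
  ring_nf

theorem commute_pairSum_X {α β : Fin ctx.l → ℤ} (hα : α ∈ ctx.Δ) (hβ : β ∈ ctx.Δ)
    (h : α + β ∉ ctx.Δ) (s a b k : ℤ) : Commute (ctx.pairSum α α s a b) (ctx.X β k) :=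
  Commute.sum_left _ _ _ fun n _ ↦
    (commute_X hα hβ h n k).mul_left (commute_X hα hβ h (s - n) k)

theorem pairSum_sub_pairSum_mem (S : Submodule ctx.U ctx.U) {α β : Fin ctx.l → ℤ}
    {s a b a' b' : ℤ} (ha : a ≤ a') (hb : b' ≤ b)
    (h : ∀ n ∈ Finset.Icc a b, n ∉ Finset.Icc a' b' → ctx.X α n * ctx.X β (s - n) ∈ S) :
    ctx.pairSum α β s a b - ctx.pairSum α β s a' b' ∈ S := by
  rw [pairSum, pairSum, ← Finset.sum_sdiff_eq_sub (Finset.Icc_subset_Icc ha hb)]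
  exact S.sum_mem fun n hn ↦ h n (Finset.mem_sdiff.1 hn).1 (Finset.mem_sdiff.1 hn).2

theorem pairSum_sroot_sub_pairSum_mem (S : Submodule ctx.U ctx.U) (j : Fin ctx.l)
    {s a b a' b' : ℤ} (hs : a + b = s) (hs' : a' + b' = s) (ha : a ≤ a')
    (h : ∀ n, a ≤ n → n < a' → ctx.X (ctx.sroot j) n * ctx.X (ctx.sroot j) (s - n) ∈ S) :
    ctx.pairSum (ctx.sroot j) (ctx.sroot j) s a b
      - ctx.pairSum (ctx.sroot j) (ctx.sroot j) s a' b' ∈ S := by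
  refine pairSum_sub_pairSum_mem S ha (by omega) fun n hn hn' ↦ ?_
  simp only [Finset.mem_Icc] at hn hn'
  by_cases hlt : n < a'
  · exact h n hn.1 hlt
  · rw [(commute_X_sroot j n (s - n)).eq]
    simpa only [sub_sub_cancel] using h (s - n) (by omega) (by omega)

theorem pairSum_mul_X_sub_X_mul_pairSum {i j : Fin ctx.l} (hM : ctx.M j i = -1) {s a b : ℤ}
    (hs : a + b = s) (k : ℤ) :
    ctx.pairSum (ctx.sroot j) (ctx.sroot j) s a b * ctx.X (ctx.sroot i) k
        - ctx.X (ctx.sroot i) k * ctx.pairSum (ctx.sroot j) (ctx.sroot j) s a b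
      = (2 * ctx.C (ctx.sroot j) (ctx.sroot i)) •
          ctx.pairSum (ctx.sroot j + ctx.sroot i) (ctx.sroot j) (s + k) (a + k) (b + k) := by
  set δ := ctx.sroot j + ctx.sroot i
  have hδ : δ ∈ ctx.Δ := (sroot_add_sroot_mem_iff j i).2 hM
  have hjδ : ctx.sroot j + δ ∉ ctx.Δ := by
    have h := ctx.two_simple_add_not_mem j i
    rw [two_smul, add_assoc] at h
    exact h
  have hterm : ∀ n, ctx.X (ctx.sroot j) n * ctx.X (ctx.sroot j) (s - n) * ctx.X (ctx.sroot i) k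
        - ctx.X (ctx.sroot i) k * (ctx.X (ctx.sroot j) n * ctx.X (ctx.sroot j) (s - n))
      = ctx.C (ctx.sroot j) (ctx.sroot i) •
          (ctx.X δ (s - n + k) * ctx.X (ctx.sroot j) n
            + ctx.X δ (n + k) * ctx.X (ctx.sroot j) (s - n)) := by
    intro n
    rw [mul_assoc, X_mul_X_of_add_mem (sroot_mem j) (sroot_mem i) hδ, mul_add, ← mul_assoc,
      X_mul_X_of_add_mem (sroot_mem j) (sroot_mem i) hδ, mul_smul_comm,
      (commute_X (sroot_mem j) hδ hjδ n _).eq]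
    simp only [add_mul, smul_mul_assoc, mul_assoc, smul_add]
    abel
  rw [pairSum, pairSum, Finset.sum_mul, Finset.mul_sum, ← Finset.sum_sub_distrib]
  simp only [hterm]
  rw [← Finset.smul_sum, Finset.sum_add_distrib,
    ← Finset.sum_Icc_comp_reflect (fun n ↦ ctx.X δ (s - n + k) * ctx.X (ctx.sroot j) n), ← hs]
  simp only [sub_sub_cancel, ← two_smul ℂ, smul_smul, ← Finset.sum_Icc_comp_add,
    add_sub_add_right_eq_sub, mul_comm]

theorem R_mul_X_mem_I0 {i j : Fin ctx.l} (h : ctx.sroot j + ctx.sroot i ∉ ctx.Δ) (t k : ℤ) :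
    ctx.R j t * ctx.X (ctx.sroot i) k ∈ ctx.I0 := by
  rw [R_eq_pairSum, (commute_pairSum_X (sroot_mem j) (sroot_mem i) h (-t) (1 - t) (-1) k).eq,
    ← R_eq_pairSum]
  exact Ideal.mul_mem_left _ _ (R_mem_I0 j t)

theorem pairSum_self_mul_X_neg_one_mem_I0 (i : Fin ctx.l) (t : ℤ) :
    ctx.pairSum (ctx.sroot i) (ctx.sroot i) (-t - 4) (-t - 1) (-3)
      * ctx.X (ctx.sroot i) (-1) ∈ ctx.I0 := by
  let S := ctx.I0.comapMulRight (RingHom.id ctx.U) (ctx.X (ctx.sroot i) (-1))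
  have hR : ctx.pairSum (ctx.sroot i) (ctx.sroot i) (-t - 4) (-t - 3) (-1) ∈ S := by
    rw [pairSum_eq_R i (by ring)]
    exact R_mul_X_mem_I0 (sroot_add_self_not_mem i) _ _
  -- the boundary terms carry a factor `x_{α_i}(-1)` or `x_{α_i}(-2)`, which `x_{α_i}(-1)` kills
  have hdiff : ctx.pairSum (ctx.sroot i) (ctx.sroot i) (-t - 4) (-t - 3) (-1)
      - ctx.pairSum (ctx.sroot i) (ctx.sroot i) (-t - 4) (-t - 1) (-3) ∈ S := by
    refine pairSum_sroot_sub_pairSum_mem S i (by ring) (by ring) (by omega) fun n hn hn' ↦ ?_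
    rw [Submodule.mem_comapMulRight, RingHom.id_apply, mul_assoc]
    obtain rfl | rfl : n = -t - 3 ∨ n = -t - 2 := by omega
    · rw [show -t - 4 - (-t - 3) = -1 by ring]
      exact Ideal.mul_mem_left _ _ (X_neg_one_mul_X_neg_one_mem_I0 i)
    · rw [show -t - 4 - (-t - 2) = -2 by ring]
      exact Ideal.mul_mem_left _ _ (X_neg_two_mul_X_neg_one_mem_I0 i)
  simpa [S] using sub_mem hR hdiff

-- the part with `2 - t ≤ n` is a nonzero multiple of `[R^j_{-1,t-1}, x_{α_i}(0)] ∈ I_{λ_0}`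
theorem pairSum_sroot_add_sroot_mem_I0 {i j : Fin ctx.l} (hM : ctx.M j i = -1) (t : ℤ) :
    ctx.pairSum (ctx.sroot j + ctx.sroot i) (ctx.sroot j) (1 - t) (1 - t) (-1) ∈ ctx.I0 := by
  have hδ : ctx.sroot j + ctx.sroot i ∈ ctx.Δ := (sroot_add_sroot_mem_iff j i).2 hM
  have hC : 2 * ctx.C (ctx.sroot j) (ctx.sroot i) ≠ 0 :=
    mul_ne_zero two_ne_zero (ctx.C_ne_zero _ (sroot_mem j) _ (sroot_mem i) hδ)
  have hinner : ctx.pairSum (ctx.sroot j + ctx.sroot i) (ctx.sroot j) (1 - t) (2 - t) (-1)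
      ∈ ctx.I0 := by
    have hcomm := sub_mem
      (Ideal.mul_mem_left _ (ctx.R j (-(1 - t))) (X_mem_I0 (sroot_mem i) le_rfl))
      (Ideal.mul_mem_left _ (ctx.X (ctx.sroot i) 0) (R_mem_I0 j (-(1 - t))))
    rw [← pairSum_eq_R j (a := 2 - t) (by ring),
      pairSum_mul_X_sub_X_mul_pairSum hM (by ring) 0] at hcomm
    have h := Submodule.smul_of_tower_mem _ (2 * ctx.C (ctx.sroot j) (ctx.sroot i))⁻¹ hcomm
    rw [smul_smul, inv_mul_cancel₀ hC, one_smul] at h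
    simpa using h
  have hdiff : ctx.pairSum (ctx.sroot j + ctx.sroot i) (ctx.sroot j) (1 - t) (1 - t) (-1)
      - ctx.pairSum (ctx.sroot j + ctx.sroot i) (ctx.sroot j) (1 - t) (2 - t) (-1) ∈ ctx.I0 := by
    refine pairSum_sub_pairSum_mem _ (by omega) le_rfl fun n hn hn' ↦ ?_
    obtain rfl : n = 1 - t := by simp only [Finset.mem_Icc] at hn hn'; omega
    exact Ideal.mul_mem_left _ _ (X_mem_I0 (sroot_mem j) (by omega))
  simpa using add_mem hdiff hinner

theorem pairSum_adjacent_mul_X_neg_one_mem_I0 {i j : Fin ctx.l} (hM : ctx.M i j = -1) (t : ℤ) :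
    ctx.pairSum (ctx.sroot j) (ctx.sroot j) (2 - t) (2 - t) 0
      * ctx.X (ctx.sroot i) (-1) ∈ ctx.I0 := by
  have hMji : ctx.M j i = -1 := by rwa [M_apply_symm]
  have hleft : ctx.X (ctx.sroot i) (-1) * ctx.pairSum (ctx.sroot j) (ctx.sroot j) (2 - t) (2 - t) 0
      ∈ ctx.I0 := by
    have hdiff : ctx.pairSum (ctx.sroot j) (ctx.sroot j) (2 - t) (2 - t) 0
        - ctx.pairSum (ctx.sroot j) (ctx.sroot j) (2 - t) (3 - t) (-1) ∈ ctx.I0 := by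
      refine pairSum_sroot_sub_pairSum_mem _ j (by ring) (by ring) (by omega) fun n hn hn' ↦ ?_
      obtain rfl : n = 2 - t := by omega
      exact Ideal.mul_mem_left _ _ (X_mem_I0 (sroot_mem j) (by omega))
    have hR := R_mem_I0 j (-(2 - t))
    rw [← pairSum_eq_R j (a := 3 - t) (by ring)] at hR
    simpa using Ideal.mul_mem_left _ (ctx.X (ctx.sroot i) (-1)) (add_mem hdiff hR)
  have hcomm : ctx.pairSum (ctx.sroot j) (ctx.sroot j) (2 - t) (2 - t) 0 * ctx.X (ctx.sroot i) (-1)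
      - ctx.X (ctx.sroot i) (-1) * ctx.pairSum (ctx.sroot j) (ctx.sroot j) (2 - t) (2 - t) 0
      ∈ ctx.I0 := by
    rw [pairSum_mul_X_sub_X_mul_pairSum hMji (by ring) (-1)]
    refine Submodule.smul_of_tower_mem _ _ ?_
    convert pairSum_sroot_add_sroot_mem_I0 hMji t using 2 <;> ring
  simpa using add_mem hcomm hleft

theorem pairSum_shift_mul_X_neg_one_mem_I0 (i j : Fin ctx.l) (t : ℤ) :
    ctx.pairSum (ctx.sroot j) (ctx.sroot j) (-t - 2 * ctx.M i j) (1 - t - ctx.M i j)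
        (-1 - ctx.M i j) * ctx.X (ctx.sroot i) (-1) ∈ ctx.I0 := by
  by_cases hji : j = i
  · subst hji
    rw [ctx.M_diag]
    convert pairSum_self_mul_X_neg_one_mem_I0 j t using 3 <;> ring
  rcases ctx.M_offdiag i j (Ne.symm hji) with hM | hM
  · have hδ : ctx.sroot j + ctx.sroot i ∉ ctx.Δ := by
      rw [sroot_add_sroot_mem_iff, M_apply_symm, hM]
      omega
    simpa [hM, R_eq_pairSum] using R_mul_X_mem_I0 hδ t (-1)
  · convert pairSum_adjacent_mul_X_neg_one_mem_I0 hM t using 3 <;> rw [hM] <;> ring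

end ADEContext

/-- The characters `ν, ν'` are given by `νu j = ν(α_j)`, `νu' j = ν'(α_j)`; `τ` and `τ'` are the
extensions to `U(𝔫̄)` of `τ_{ω_i,ν}` and `τ_{λ_i,ν'}`, and `σ_{ω_i,ν}(a) = τ(a) x_{α_i}(-1)`. -/
theorem sigma_omega_comp_tau_lambda_maps_I0_into_I0 (ctx : ADEContext) (i : Fin ctx.l)
    (νu νu' : Fin ctx.l → ℂˣ) (τ τ' : ctx.U ≃ₐ[ℂ] ctx.U)
    (hτ : ∀ α ∈ ctx.Δ, ∀ m : ℤ,
      τ (ctx.X α m) = ctx.charVal νu α • ctx.X α (m - ((∑ j, ctx.M i j * α j) - α i)))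
    (hτ' : ∀ α ∈ ctx.Δ, ∀ m : ℤ,
      τ' (ctx.X α m) = ctx.charVal νu' α • ctx.X α (m - α i)) :
    ∀ u ∈ ctx.I0, τ (τ' u) * ctx.X (ctx.sroot i) (-1) ∈ ctx.I0 := by
  set φ := τ'.trans τ
  have hφ : ∀ α ∈ ctx.Δ, ∀ m, φ (ctx.X α m)
      = (ctx.charVal νu' α * ctx.charVal νu α) • ctx.X α (m - ctx.M.mulVec α i) := by
    intro α hα m
    rw [AlgEquiv.trans_apply, hτ' α hα, map_smul, hτ α hα, smul_smul, sub_sub, add_sub_cancel]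
    rfl
  intro u hu
  suffices h : ctx.I0 ≤ ctx.I0.comapMulRight φ (ctx.X (ctx.sroot i) (-1)) from h hu
  refine sup_le (Submodule.span_le.2 ?_) (Submodule.span_le.2 ?_)
  · rintro _ ⟨j, t, -, rfl⟩
    rw [SetLike.mem_coe, Submodule.mem_comapMulRight, ADEContext.R_eq_pairSum,
      ADEContext.map_pairSum φ (hφ _ (ADEContext.sroot_mem j)), ADEContext.mulVec_sroot,
      smul_mul_assoc]
    exact Submodule.smul_of_tower_mem _ _ (ADEContext.pairSum_shift_mul_X_neg_one_mem_I0 i j t)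
  · rintro _ ⟨α, hα, m, hm, rfl⟩
    rw [SetLike.mem_coe, Submodule.mem_comapMulRight, hφ α hα, smul_mul_assoc]
    exact Submodule.smul_of_tower_mem _ _ (ADEContext.X_mul_X_neg_one_mem_I0 i hα (by omega))
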